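/- (Scalarization.) Under the generalized convexity condition (a1), interior condition (a2), and Slater constraint qualification, x̄ ∈ D is a weakly efficient solution of (VP) if and only if there exists ξ ∈ Y₊* \ {0} such that x̄ is an optimal solution of the scalar problem min_{x ∈ D} ξ(f(x)), i.e., there exists ȳ ∈ f(x̄) with ξ(y) ≥ ξ(ȳ) for all x ∈ D and y ∈ f(x). -/

import Mathlib

open Set Pointwise

/-!
Weak efficiency of `ybar` says that `0` is not in the set `M` of the alternative theorem built
from `f(·) - ybar`, `g`, `h`. By (a1) and (a2) `M` is convex with nonempty interior, so
Hahn–Banach gives a nonzero functional `(ξ, η, ζ)` that is nonnegative on `M`. Every coordinate of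
`M` is stable under positive scaling and under adding the cone, so sending the scale to infinity
yields `ξ ∈ Y₊*`, `η ∈ Z₊*` and `ξ (y - ybar) + η z + ζ w ≥ 0` on the images of `D`. The Slater
condition excludes `ξ = 0`, and at a feasible `x` (where `η z ≤ 0` and `0 ∈ h x`) the inequality
becomes `ξ ybar ≤ ξ y`. Conversely, a nonzero `ξ ∈ Y₊*` is positive on `int Y₊`.
-/

lemma nonneg_of_forall_pos_mul_add_nonneg {c d : ℝ} (h : ∀ t : ℝ, 0 < t → 0 ≤ t * c + d) :
    0 ≤ c := by
  by_contra! hc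
  have ht : 0 < (|d| + 1) / -c := div_pos (by positivity) (neg_pos.2 hc)
  have hmul : (|d| + 1) / -c * c = -(|d| + 1) := by
    rw [div_mul_eq_mul_div, div_neg, mul_div_assoc, div_self hc.ne, mul_one]
  linarith [h _ ht, le_abs_self d]

lemma LinearMap.nonneg_of_forall_add_smul_mem {E : Type*} [AddCommGroup E] [Module ℝ E]
    (ℓ : E →ₗ[ℝ] ℝ) {M : Set E} (hℓ : ∀ p ∈ M, 0 ≤ ℓ p) {p d : E}
    (hd : ∀ t : ℝ, 0 < t → p + t • d ∈ M) : 0 ≤ ℓ d :=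
  nonneg_of_forall_pos_mul_add_nonneg fun t ht => by
    simpa [add_comm] using hℓ _ (hd t ht)

section Cone

variable {E : Type*} [AddCommGroup E] [Module ℝ E] {K : Set E}

lemma add_subset_of_convex_of_smul_subset (hconv : Convex ℝ K)
    (hcone : ∀ t : ℝ, 0 < t → t • K ⊆ K) : K + K ⊆ K := by
  have h2 := hconv.add_smul zero_le_one zero_le_one
  rw [one_smul, one_add_one_eq_two] at h2
  exact h2 ▸ hcone 2 two_pos

lemma zero_notMem_iUnion_smul_add {S : Set E} (hcone : ∀ t : ℝ, 0 < t → t • K ⊆ K)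
    (hS : ∀ s ∈ S, -s ∉ K) : (0 : E) ∉ ⋃ t ∈ Ioi (0 : ℝ), (t • S + K) := by
  simp only [mem_iUnion, exists_prop, not_exists, not_and]
  rintro t (ht : 0 < t) ⟨_, ⟨s, hs, rfl⟩, k, hk, hsk⟩
  refine hS s hs ?_
  rw [← inv_smul_smul₀ (ne_of_gt ht) (-s), smul_neg, ← eq_neg_of_add_eq_zero_right hsk]
  exact hcone _ (inv_pos.2 ht) (smul_mem_smul_set hk)

lemma add_mem_iUnion_smul_add {S L : Set E} (hKL : K + L ⊆ K) {a l : E}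
    (ha : a ∈ ⋃ t ∈ Ioi (0 : ℝ), (t • S + K)) (hl : l ∈ L) :
    a + l ∈ ⋃ t ∈ Ioi (0 : ℝ), (t • S + K) := by
  obtain ⟨t, ht, s, hs, k, hk, rfl⟩ := mem_iUnion₂.1 ha
  exact mem_iUnion₂.2 ⟨t, ht, add_assoc s k l ▸ add_mem_add hs (hKL (add_mem_add hk hl))⟩

variable [TopologicalSpace E]

lemma interior_add_subset_interior [IsTopologicalAddGroup E] (hconv : Convex ℝ K)
    (hcone : ∀ t : ℝ, 0 < t → t • K ⊆ K) : interior K + K ⊆ interior K :=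
  subset_interior_add_left.trans (interior_mono (add_subset_of_convex_of_smul_subset hconv hcone))

lemma smul_interior_subset_interior [ContinuousConstSMul ℝ E]
    (hcone : ∀ t : ℝ, 0 < t → t • K ⊆ K) {t : ℝ} (ht : 0 < t) : t • interior K ⊆ interior K := by
  rw [← interior_smul₀ (ne_of_gt ht)]
  exact interior_mono (hcone t ht)

lemma ContinuousLinearMap.pos_of_mem_interior [ContinuousAdd E] [ContinuousSMul ℝ E]
    {ξ : E →L[ℝ] ℝ} (hξ : ξ ≠ 0) (hK : ∀ y ∈ K, 0 ≤ ξ y) {v : E} (hv : v ∈ interior K) :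
    0 < ξ v := by
  have hsub : ξ '' interior K ⊆ interior (Ici 0) :=
    interior_maximal (image_subset_iff.2 fun y hy => hK y (interior_subset hy))
      (ξ.isOpenMap_of_ne_zero hξ _ isOpen_interior)
  simpa using hsub (mem_image_of_mem ξ hv)

lemma Convex.exists_ne_zero_nonneg_of_zero_notMem [IsTopologicalAddGroup E]
    [ContinuousSMul ℝ E] {M : Set E} (hM : Convex ℝ M)
    (hMint : (interior M).Nonempty) (h0 : (0 : E) ∉ M) :
    ∃ ℓ : E →L[ℝ] ℝ, ℓ ≠ 0 ∧ ∀ p ∈ M, 0 ≤ ℓ p := by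
  obtain ⟨f, hf0, hfM⟩ := geometric_hahn_banach_of_nonempty_interior_point hM
    (fun h => h0 (interior_subset h)) hMint
  exact ⟨-f, neg_ne_zero.2 hf0, fun p hp => by simpa using hfM p hp⟩

end Cone

section Alternative

variable {Y Z W : Type*}
  [AddCommGroup Y] [Module ℝ Y] [TopologicalSpace Y] [IsTopologicalAddGroup Y] [ContinuousSMul ℝ Y]
  [AddCommGroup Z] [Module ℝ Z] [TopologicalSpace Z] [IsTopologicalAddGroup Z] [ContinuousSMul ℝ Z]
  [AddCommGroup W] [Module ℝ W] [TopologicalSpace W] [IsTopologicalAddGroup W] [ContinuousSMul ℝ W]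

def alternativeSet (A : Set Y) (B : Set Z) (C : Set W) (UY : Set Y) (UZ : Set Z) :
    Set (Y × Z × W) :=
  {p | p.1 ∈ ⋃ t ∈ Ioi (0 : ℝ), (t • A + UY) ∧ p.2.1 ∈ ⋃ t ∈ Ioi (0 : ℝ), (t • B + UZ) ∧
    p.2.2 ∈ ⋃ t ∈ Ioi (0 : ℝ), t • C}

theorem exists_multipliers_of_convex_alternativeSet {A : Set Y} {B : Set Z} {C : Set W}
    {KY : Set Y} {KZ : Set Z}
    (hKYconv : Convex ℝ KY) (hKYcone : ∀ t : ℝ, 0 < t → t • KY ⊆ KY)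
    (hKYint : (interior KY).Nonempty)
    (hKZconv : Convex ℝ KZ) (hKZcone : ∀ t : ℝ, 0 < t → t • KZ ⊆ KZ)
    (hKZint : (interior KZ).Nonempty)
    (hM : Convex ℝ (alternativeSet A B C (interior KY) (interior KZ)))
    (hMint : (interior (alternativeSet A B C (interior KY) (interior KZ))).Nonempty)
    (hA : ∀ a ∈ A, -a ∉ interior KY) :
    ∃ (ξ : Y →L[ℝ] ℝ) (η : Z →L[ℝ] ℝ) (ζ : W →L[ℝ] ℝ), (ξ ≠ 0 ∨ η ≠ 0 ∨ ζ ≠ 0) ∧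
      (∀ y ∈ KY, 0 ≤ ξ y) ∧ (∀ z ∈ KZ, 0 ≤ η z) ∧
      ∀ a ∈ A, ∀ b ∈ B, ∀ c ∈ C, 0 ≤ ξ a + η b + ζ c := by
  set M := alternativeSet A B C (interior KY) (interior KZ)
  have h0M : (0 : Y × Z × W) ∉ M := fun h0 =>
    zero_notMem_iUnion_smul_add (fun t ht => smul_interior_subset_interior hKYcone ht) hA h0.1
  obtain ⟨ℓ, hℓ0, hℓM⟩ := hM.exists_ne_zero_nonneg_of_zero_notMem hMint h0M
  obtain ⟨⟨ξ, ηζ⟩, rfl⟩ := (ContinuousLinearMap.coprodEquiv (S := ℝ)).surjective ℓ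
  obtain ⟨⟨η, ζ⟩, rfl⟩ := (ContinuousLinearMap.coprodEquiv (S := ℝ)).surjective ηζ
  have hrec : ∀ p d : Y × Z × W, (∀ t : ℝ, 0 < t → p + t • d ∈ M) →
      0 ≤ ξ d.1 + η d.2.1 + ζ d.2.2 := fun p d hd => by
    simpa [add_assoc] using
      (ContinuousLinearMap.toLinearMap _).nonneg_of_forall_add_smul_mem hℓM hd
  obtain ⟨q, hq⟩ := hMint.mono interior_subset
  obtain ⟨v, hv⟩ := hKYint
  obtain ⟨u, hu⟩ := hKZint
  refine ⟨ξ, η, ζ, ?_, fun y hy => ?_, fun z hz => ?_, fun a ha b hb c hc => ?_⟩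
  · contrapose! hℓ0
    obtain ⟨rfl, rfl, rfl⟩ := hℓ0
    exact ContinuousLinearMap.ext fun p => by simp
  · simpa using hrec q (y, 0, 0) fun t ht =>
      ⟨add_mem_iUnion_smul_add (interior_add_subset_interior hKYconv hKYcone) hq.1
        (hKYcone t ht (smul_mem_smul_set hy)), by simpa using hq.2⟩
  · simpa using hrec q (0, z, 0) fun t ht =>
      ⟨by simpa using hq.1, add_mem_iUnion_smul_add
        (interior_add_subset_interior hKZconv hKZcone) hq.2.1
        (hKZcone t ht (smul_mem_smul_set hz)), by simpa using hq.2.2⟩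
  · exact hrec (v, u, 0) (a, b, c) fun t ht =>
      ⟨mem_iUnion₂.2 ⟨t, ht, (add_comm (t • a) v ▸ add_mem_add (smul_mem_smul_set ha) hv :
          v + t • a ∈ _)⟩,
        mem_iUnion₂.2 ⟨t, ht, (add_comm (t • b) u ▸ add_mem_add (smul_mem_smul_set hb) hu :
          u + t • b ∈ _)⟩,
        mem_iUnion₂.2 ⟨t, ht, by simpa using smul_mem_smul_set hc⟩⟩

end Alternative

theorem scalarization_general
    {X Y Z W : Type*}
    [AddCommGroup Y] [Module ℝ Y] [TopologicalSpace Y] [IsTopologicalAddGroup Y]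
    [ContinuousSMul ℝ Y]
    [AddCommGroup Z] [Module ℝ Z] [TopologicalSpace Z] [IsTopologicalAddGroup Z]
    [ContinuousSMul ℝ Z]
    [AddCommGroup W] [Module ℝ W] [TopologicalSpace W] [IsTopologicalAddGroup W]
    [ContinuousSMul ℝ W]
    (f : X → Set Y) (g : X → Set Z) (h : X → Set W)
    (Ypos : Set Y) (hYconv : Convex ℝ Ypos)
    (hYcone : ∀ t : ℝ, 0 < t → t • Ypos ⊆ Ypos)
    (hYint : (interior Ypos).Nonempty)
    (Zpos : Set Z) (hZconv : Convex ℝ Zpos)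
    (hZcone : ∀ t : ℝ, 0 < t → t • Zpos ⊆ Zpos)
    (hZint : (interior Zpos).Nonempty)
    (D : Set X) (hD : D = {x | (g x ∩ (-Zpos)).Nonempty ∧ (0 : W) ∈ h x})
    (xbar : X) (hxbar : xbar ∈ D)
    -- (a1) and (a2) for the maps `f(·) - ybar`, `g`, `h`:
    (ha : ∀ ybar ∈ f xbar,
      Convex ℝ {p : Y × Z × W |
          p.1 ∈ ⋃ t ∈ Set.Ioi (0 : ℝ),
              (t • ((⋃ x ∈ D, f x) - {ybar}) + interior Ypos) ∧
          p.2.1 ∈ ⋃ t ∈ Set.Ioi (0 : ℝ), (t • (⋃ x ∈ D, g x) + interior Zpos) ∧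
          p.2.2 ∈ ⋃ t ∈ Set.Ioi (0 : ℝ), t • (⋃ x ∈ D, h x)} ∧
      (interior {p : Y × Z × W |
          p.1 ∈ ⋃ t ∈ Set.Ioi (0 : ℝ),
              (t • ((⋃ x ∈ D, f x) - {ybar}) + interior Ypos) ∧
          p.2.1 ∈ ⋃ t ∈ Set.Ioi (0 : ℝ), (t • (⋃ x ∈ D, g x) + interior Zpos) ∧
          p.2.2 ∈ ⋃ t ∈ Set.Ioi (0 : ℝ), t • (⋃ x ∈ D, h x)}).Nonempty)
    -- Slater constraint qualification:
    (hSlater : ∀ (η : Z →L[ℝ] ℝ) (ζ : W →L[ℝ] ℝ), (∀ z ∈ Zpos, 0 ≤ η z) →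
      (η ≠ 0 ∨ ζ ≠ 0) →
      ∃ x ∈ D, ∃ t : ℝ, t < 0 ∧ t ∈ η '' (g x) ∧ t ∈ ζ '' (h x)) :
    (∃ ybar ∈ f xbar, ∀ x ∈ D, ∀ y ∈ f x, ybar - y ∉ interior Ypos) ↔
      (∃ ξ : Y →L[ℝ] ℝ, ξ ≠ 0 ∧ (∀ y ∈ Ypos, 0 ≤ ξ y) ∧
        ∃ ybar ∈ f xbar, ∀ x ∈ D, ∀ y ∈ f x, ξ ybar ≤ ξ y) := by
  refine ⟨fun ⟨ybar, hybar, hweak⟩ => ?_, fun ⟨ξ, hξ0, hξ, ybar, hybar, hmin⟩ => ?_⟩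
  · have hM : Convex ℝ (alternativeSet ((⋃ x ∈ D, f x) - {ybar}) (⋃ x ∈ D, g x)
        (⋃ x ∈ D, h x) (interior Ypos) (interior Zpos)) := (ha ybar hybar).1
    obtain ⟨ξ, η, ζ, hne, hξ, hη, hmult⟩ :=
      exists_multipliers_of_convex_alternativeSet
        hYconv hYcone hYint hZconv hZcone hZint hM (ha ybar hybar).2 (by
          rintro _ ⟨y, hy, _, rfl, rfl⟩
          obtain ⟨x, hx, hyx⟩ := mem_iUnion₂.1 hy
          simpa using hweak x hx y hyx)
    have key : ∀ x ∈ D, ∀ y ∈ f x, ∀ x' ∈ D, ∀ z ∈ g x', ∀ w ∈ h x',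
        0 ≤ ξ y - ξ ybar + η z + ζ w := fun x hx y hy x' hx' z hz w hw => by
      simpa using hmult _ (sub_mem_sub (mem_iUnion₂_of_mem hx hy) rfl) z
        (mem_iUnion₂_of_mem hx' hz) w (mem_iUnion₂_of_mem hx' hw)
    have hξ0 : ξ ≠ 0 := by
      rintro rfl
      obtain ⟨x, hx, t, ht, ⟨z, hz, hzt⟩, ⟨w, hw, hwt⟩⟩ := hSlater η ζ hη (by simpa using hne)
      linarith [key xbar hxbar ybar hybar x hx z hz w hw]
    refine ⟨ξ, hξ0, hξ, ybar, hybar, fun x hx y hy => ?_⟩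
    obtain ⟨⟨z, hz, hzneg⟩, hw⟩ : (g x ∩ -Zpos).Nonempty ∧ (0 : W) ∈ h x := by
      rwa [hD] at hx
    linarith [key x hx y hy x hx z hz 0 hw, hη (-z) hzneg, map_neg η z, map_zero ζ]
  · refine ⟨ybar, hybar, fun x hx y hy hint => (hmin x hx y hy).not_gt ?_⟩
    simpa using ξ.pos_of_mem_interior hξ0 hξ hint

/-- Theorem 3.3 (scalarization): under (a1), (a2) and the Slater constraint
qualification, `xbar` is weakly efficient for (VP) iff it solves a scalarized
problem `min ξ(f(x))` for some nonzero `ξ ∈ Y₊*`. -/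
theorem scalarization
    {X Y Z W : Type*}
    [AddCommGroup Y] [Module ℝ Y] [TopologicalSpace Y] [IsTopologicalAddGroup Y]
    [ContinuousSMul ℝ Y] [LocallyConvexSpace ℝ Y]
    [AddCommGroup Z] [Module ℝ Z] [TopologicalSpace Z] [IsTopologicalAddGroup Z]
    [ContinuousSMul ℝ Z] [LocallyConvexSpace ℝ Z]
    [AddCommGroup W] [Module ℝ W] [TopologicalSpace W] [IsTopologicalAddGroup W]
    [ContinuousSMul ℝ W] [LocallyConvexSpace ℝ W]
    (f : X → Set Y) (g : X → Set Z) (h : X → Set W)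
    (Ypos : Set Y) (hYconv : Convex ℝ Ypos) (hY0 : (0 : Y) ∈ Ypos)
    (hYcone : ∀ t : ℝ, 0 < t → t • Ypos ⊆ Ypos)
    (hYclosed : IsClosed Ypos) (hYpointed : Ypos ∩ (-Ypos) = {0})
    (hYint : (interior Ypos).Nonempty)
    (Zpos : Set Z) (hZconv : Convex ℝ Zpos) (hZ0 : (0 : Z) ∈ Zpos)
    (hZcone : ∀ t : ℝ, 0 < t → t • Zpos ⊆ Zpos)
    (hZclosed : IsClosed Zpos) (hZpointed : Zpos ∩ (-Zpos) = {0})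
    (hZint : (interior Zpos).Nonempty)
    (D : Set X) (hD : D = {x | (g x ∩ (-Zpos)).Nonempty ∧ (0 : W) ∈ h x})
    (xbar : X) (hxbar : xbar ∈ D)
    -- (a1) and (a2) for the maps `f(·) - ybar`, `g`, `h`:
    (ha : ∀ ybar ∈ f xbar,
      Convex ℝ {p : Y × Z × W |
          p.1 ∈ ⋃ t ∈ Set.Ioi (0 : ℝ),
              (t • ((⋃ x ∈ D, f x) - {ybar}) + interior Ypos) ∧
          p.2.1 ∈ ⋃ t ∈ Set.Ioi (0 : ℝ), (t • (⋃ x ∈ D, g x) + interior Zpos) ∧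
          p.2.2 ∈ ⋃ t ∈ Set.Ioi (0 : ℝ), t • (⋃ x ∈ D, h x)} ∧
      (interior {p : Y × Z × W |
          p.1 ∈ ⋃ t ∈ Set.Ioi (0 : ℝ),
              (t • ((⋃ x ∈ D, f x) - {ybar}) + interior Ypos) ∧
          p.2.1 ∈ ⋃ t ∈ Set.Ioi (0 : ℝ), (t • (⋃ x ∈ D, g x) + interior Zpos) ∧
          p.2.2 ∈ ⋃ t ∈ Set.Ioi (0 : ℝ), t • (⋃ x ∈ D, h x)}).Nonempty)
    -- Slater constraint qualification:
    (hSlater : ∀ (η : Z →L[ℝ] ℝ) (ζ : W →L[ℝ] ℝ), (∀ z ∈ Zpos, 0 ≤ η z) →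
      (η ≠ 0 ∨ ζ ≠ 0) →
      ∃ x ∈ D, ∃ t : ℝ, t < 0 ∧ t ∈ η '' (g x) ∧ t ∈ ζ '' (h x)) :
    (∃ ybar ∈ f xbar, ∀ x ∈ D, ∀ y ∈ f x, ybar - y ∉ interior Ypos) ↔
      (∃ ξ : Y →L[ℝ] ℝ, ξ ≠ 0 ∧ (∀ y ∈ Ypos, 0 ≤ ξ y) ∧
        ∃ ybar ∈ f xbar, ∀ x ∈ D, ∀ y ∈ f x, ξ ybar ≤ ξ y) :=
  scalarization_general f g h Ypos hYconv hYcone hYint Zpos hZconv hZcone hZint D hD xbar hxbar ha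
    hSlater
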